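/- arXiv:math/0401035 — 4 statements merged into one kernel-verified Lean document; each statement's English description precedes it below -/
import Mathlib

section
/- Let α, β be elements of the Laurent polynomial ring ℤ[A, A⁻¹], and define ⟨K⟩ = -A⁻³·α - A³·β and ⟨K_s⟩ = -A³·α - A⁻³·β. Then (⟨K⟩ = A⁶·⟨K_s⟩ or ⟨K⟩ = A⁻⁶·⟨K_s⟩) if and only if (α = 0 or β = 0). (Note that ((-A)³)^{±2} = A^{±6}.) -/
/-!
Expanding, `K - A⁶ K_s = (A⁹ - A⁻³) α` and `K - A⁻⁶ K_s = (A⁻⁹ - A³) β`. Distinct monomials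
differ, so in the domain `ℤ[A, A⁻¹]` each equation holds exactly when the corresponding
coefficient vanishes.
-/

open LaurentPolynomial

namespace LaurentPolynomial

variable {R : Type*}

theorem T_injective [Semiring R] [Nontrivial R] : Function.Injective (T : ℤ → R[T;T⁻¹]) := by
  intro m n h
  simpa using congrArg (·.coeff n) h

theorem T_sub_T_ne_zero [Ring R] [Nontrivial R] {m n : ℤ} (h : m ≠ n) :
    (T m - T n : R[T;T⁻¹]) ≠ 0 :=
  sub_ne_zero.mpr (T_injective.ne h)

variable [CommRing R] (α β : R[T;T⁻¹]) (n : ℤ)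

theorem bracket_sub_T_mul_switch :
    (-T (-n) * α - T n * β) - T (2 * n) * (-T n * α - T (-n) * β) = (T (3 * n) - T (-n)) * α := by
  have h₁ : (T (2 * n) * T n : R[T;T⁻¹]) = T (3 * n) := by rw [← T_add]; ring_nf
  have h₂ : (T (2 * n) * T (-n) : R[T;T⁻¹]) = T n := by rw [← T_add]; ring_nf
  linear_combination α * h₁ + β * h₂

theorem bracket_sub_T_neg_mul_switch :
    (-T (-n) * α - T n * β) - T (-(2 * n)) * (-T n * α - T (-n) * β) =
      (T (-(3 * n)) - T n) * β := by
  have h₁ : (T (-(2 * n)) * T n : R[T;T⁻¹]) = T (-n) := by rw [← T_add]; ring_nf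
  have h₂ : (T (-(2 * n)) * T (-n) : R[T;T⁻¹]) = T (-(3 * n)) := by rw [← T_add]; ring_nf
  linear_combination α * h₁ + β * h₂

end LaurentPolynomial

theorem bracket_unit_iff (α β K Ks : LaurentPolynomial ℤ)
    (hK : K = -T (-3) * α - T 3 * β)
    (hKs : Ks = -T 3 * α - T (-3) * β) :
    (K = T 6 * Ks ∨ K = T (-6) * Ks) ↔ (α = 0 ∨ β = 0) := by
  have hα : K - T 6 * Ks = (T 9 - T (-3)) * α := by
    subst hK hKs; exact bracket_sub_T_mul_switch α β 3
  have hβ : K - T (-6) * Ks = (T (-9) - T 3) * β := by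
    subst hK hKs; exact bracket_sub_T_neg_mul_switch α β 3
  rw [← sub_eq_zero, hα, ← sub_eq_zero (a := K), hβ,
    mul_eq_zero_iff_left (T_sub_T_ne_zero (by norm_num)),
    mul_eq_zero_iff_left (T_sub_T_ne_zero (by norm_num))]
end

section
/- Let α, β be elements of the Laurent polynomial ring ℤ[A, A⁻¹], and define ⟨K⟩ = -A⁻³·α - A³·β and ⟨K_s⟩ = -A³·α - A⁻³·β. Then ⟨K⟩ = A⁶·⟨K_s⟩ if and only if α = 0. -/
open LaurentPolynomial

theorem LaurentPolynomial.T_injective_s3 {R : Type*} [Semiring R] [Nontrivial R] :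
    Function.Injective (T : ℤ → R[T;T⁻¹]) := fun m n h => by
  simpa using congrArg (fun f : R[T;T⁻¹] => f.coeff n) h

theorem LaurentPolynomial.T_two_mul_mul_switch {R : Type*} [CommRing R] (n : ℤ)
    (α β : R[T;T⁻¹]) :
    T (2 * n) * (-T n * α - T (-n) * β) = -T (3 * n) * α - T n * β := by
  have h3 : (T (2 * n) * T n : R[T;T⁻¹]) = T (3 * n) := by rw [← T_add]; ring_nf
  have h1 : (T (2 * n) * T (-n) : R[T;T⁻¹]) = T n := by rw [← T_add]; ring_nf
  linear_combination -α * h3 - β * h1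

theorem LaurentPolynomial.eq_T_two_mul_mul_switch_iff {R : Type*} [CommRing R] [IsDomain R]
    {n : ℤ} (hn : n ≠ 0) (α β : R[T;T⁻¹]) :
    -T (-n) * α - T n * β = T (2 * n) * (-T n * α - T (-n) * β) ↔ α = 0 := by
  have hT : (T (3 * n) - T (-n) : R[T;T⁻¹]) ≠ 0 :=
    sub_ne_zero.mpr (T_injective_s3.ne (by omega))
  rw [T_two_mul_mul_switch, ← sub_eq_zero,
    show -T (-n) * α - T n * β - (-T (3 * n) * α - T n * β) = (T (3 * n) - T (-n)) * α by ring,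
    mul_eq_zero, or_iff_right hT]

theorem bracket_pos_iff_alpha_zero (α β K Ks : LaurentPolynomial ℤ)
    (hK : K = -T (-3) * α - T 3 * β)
    (hKs : Ks = -T 3 * α - T (-3) * β) :
    K = T 6 * Ks ↔ α = 0 := by
  subst hK hKs
  exact eq_T_two_mul_mul_switch_iff (n := 3) (by norm_num) α β
end

section
/- Let n be an integer. If there exists a Laurent polynomial W ∈ ℤ[t, t⁻¹] such that 1 - tⁿ = W·(1 - t)·(1 - t³), then n = 0. -/
/-!
Evaluate at `t = 1 + ε` in the dual numbers `ℤ[ε]`, i.e. record the value and the derivative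
at `t = 1`. Since `tⁿ ↦ 1 + nε`, the left side becomes `-nε`, while the right side is a multiple
of `(-ε)(-3ε) = 0`.
-/

open LaurentPolynomial DualNumber TrivSqZeroExt

namespace DualNumber

variable {R : Type*} [CommRing R]

theorem one_add_smul_eps_mul (a b : ℤ) :
    (1 + a • ε : R[ε]) * (1 + b • ε) = 1 + (a + b) • ε := by
  linear_combination (a * b : R[ε]) * eps_mul_eps (R := R)

@[simps]
def oneAddEps : (R[ε])ˣ where
  val := 1 + ε
  inv := 1 - ε
  val_inv := by linear_combination (-1 : R[ε]) * eps_mul_eps (R := R)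
  inv_val := by linear_combination (-1 : R[ε]) * eps_mul_eps (R := R)

theorem val_oneAddEps_zpow (n : ℤ) : ((oneAddEps ^ n : (R[ε])ˣ) : R[ε]) = 1 + n • ε := by
  induction n using Int.induction_on with
  | zero => simp
  | succ k ih =>
    rw [zpow_add_one, Units.val_mul, ih]
    simpa using one_add_smul_eps_mul (R := R) k 1
  | pred k ih =>
    rw [zpow_sub_one, Units.val_mul, ih]
    simpa [sub_eq_add_neg] using one_add_smul_eps_mul (R := R) (-k) (-1)

end DualNumber

namespace LaurentPolynomial

variable {R : Type*} [CommRing R]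

/-- The first-order jet at `t = 1`: `fst` of `jetAtOne f` is `f(1)` and `snd` is `f'(1)`. -/
noncomputable def jetAtOne : R[T;T⁻¹] →+* R[ε] :=
  eval₂ (algebraMap R R[ε]) oneAddEps

theorem jetAtOne_T (n : ℤ) : jetAtOne (T n : R[T;T⁻¹]) = 1 + n • ε := by
  rw [jetAtOne, eval₂_T, val_oneAddEps_zpow]

theorem jetAtOne_one_sub_T (n : ℤ) : jetAtOne (1 - T n : R[T;T⁻¹]) = -(n • ε) := by
  rw [map_sub, map_one, jetAtOne_T, sub_add_cancel_left]

theorem intCast_eq_zero_of_one_sub_T_eq_mul {n a b : ℤ} {W : R[T;T⁻¹]}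
    (h : 1 - T n = W * (1 - T a) * (1 - T b)) : (n : R) = 0 := by
  have hjet : -(n • ε : R[ε]) = 0 := by
    rw [← jetAtOne_one_sub_T, h, map_mul, map_mul, jetAtOne_one_sub_T, jetAtOne_one_sub_T]
    linear_combination (jetAtOne W * a * b) * eps_mul_eps (R := R)
  simpa using congrArg snd hjet

end LaurentPolynomial

theorem jones_monomial_exponent_zero (n : ℤ) (W : LaurentPolynomial ℤ)
    (h : 1 - T n = W * (1 - T 1) * (1 - T 3)) :
    n = 0 := by
  simpa using intCast_eq_zero_of_one_sub_T_eq_mul h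
end

section
/- Let u be a unit of the Laurent polynomial ring ℤ[t, t⁻¹]. If (1 - t)·(1 - t³) divides 1 - u in ℤ[t, t⁻¹], then u = 1. -/
/-!
The units of `ℤ[t, t⁻¹]` are the monomials `±tⁿ`. Evaluating at `t = 1 + ε` in the dual numbers
`ℤ[ε]` kills `(1 - t)(1 - t³)`, as both factors land in `εℤ[ε]` and `ε² = 0`, while it sends `±tⁿ`
to `±(1 + nε)`. Hence `1 = ±(1 + nε)`, which forces the sign `+` and `n = 0`.
-/

open LaurentPolynomial

namespace DualNumber

variable {R : Type*} [CommRing R]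

def unitOneAddEps : R[ε]ˣ :=
  Units.mkOfMulEqOne (1 + ε : R[ε]) (1 - ε) <| by
    linear_combination (-1 : R[ε]) * eps_mul_eps (R := R)

theorem val_unitOneAddEps_zpow (n : ℤ) :
    ((unitOneAddEps ^ n : R[ε]ˣ) : R[ε]) = 1 + (n : R[ε]) * ε := by
  have hval : ((unitOneAddEps : R[ε]ˣ) : R[ε]) = 1 + ε := rfl
  have hinv : ((unitOneAddEps⁻¹ : R[ε]ˣ) : R[ε]) = 1 - ε := rfl
  induction n using Int.induction_on with
  | zero => simp
  | succ n ih =>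
    rw [zpow_add_one, Units.val_mul, ih, hval]
    push_cast
    linear_combination (n : R[ε]) * eps_mul_eps (R := R)
  | pred n ih =>
    rw [zpow_sub_one, Units.val_mul, ih, hinv]
    push_cast
    linear_combination (n : R[ε]) * eps_mul_eps (R := R)

end DualNumber

namespace LaurentPolynomial

open DualNumber

variable {R : Type*} [CommRing R]

theorem exists_C_mul_T_of_isUnit [IsDomain R] {f : R[T;T⁻¹]} (hf : IsUnit f) :
    ∃ (a : Rˣ) (n : ℤ), f = C (a : R) * T n := by
  obtain ⟨g, hfg⟩ := hf.exists_right_inv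
  obtain ⟨n, p, hp⟩ := exists_T_pow f
  obtain ⟨m, q, hq⟩ := exists_T_pow g
  have hpq : p * q = Polynomial.X ^ (n + m) := Polynomial.toLaurent_injective <| by
    rw [map_mul, hp, hq, Polynomial.toLaurent_X_pow, Nat.cast_add, T_add,
      mul_mul_mul_comm, hfg, one_mul]
  obtain ⟨i, -, hpi⟩ := (dvd_prime_pow Polynomial.prime_X _).mp (Dvd.intro q hpq)
  obtain ⟨c, hc⟩ := hpi.symm
  obtain ⟨r, hr, hrc⟩ := Polynomial.isUnit_iff.mp c.isUnit
  refine ⟨hr.unit, i - n, ?_⟩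
  calc f = f * T n * T (-n) := by rw [mul_T_assoc, add_neg_cancel, T_zero, mul_one]
    _ = C r * T (i - n) := by
      rw [← hp, ← hc, ← hrc, map_mul, Polynomial.toLaurent_X_pow, Polynomial.toLaurent_C,
        mul_comm (T _), mul_T_assoc, ← sub_eq_add_neg]

/-- First-order Taylor expansion at `T = 1`: `f ↦ f(1) + f'(1) ε`. -/
noncomputable def evalOneAddEps : R[T;T⁻¹] →+* R[ε] :=
  eval₂ (algebraMap R R[ε]) unitOneAddEps

theorem evalOneAddEps_C_mul_T (r : R) (n : ℤ) :
    evalOneAddEps (C r * T n) = algebraMap R R[ε] r * (1 + (n : R[ε]) * ε) := by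
  rw [evalOneAddEps, eval₂_C_mul_T, val_unitOneAddEps_zpow]

theorem evalOneAddEps_one_sub_T_mul_one_sub_T (a b : ℤ) :
    evalOneAddEps ((1 - T a) * (1 - T b) : R[T;T⁻¹]) = 0 := by
  simp only [evalOneAddEps, map_mul, map_sub, map_one, eval₂_T, val_unitOneAddEps_zpow]
  linear_combination ((a : R[ε]) * b) * eps_mul_eps (R := R)

end LaurentPolynomial

theorem jones_unit_eq_one (u : (LaurentPolynomial ℤ)ˣ)
    (h : (1 - T 1) * (1 - T 3) ∣ 1 - (u : LaurentPolynomial ℤ)) :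
    (u : LaurentPolynomial ℤ) = 1 := by
  obtain ⟨a, n, hu⟩ := exists_C_mul_T_of_isUnit u.isUnit
  obtain ⟨w, hw⟩ := h
  have hφ := congrArg evalOneAddEps hw
  rw [map_mul, evalOneAddEps_one_sub_T_mul_one_sub_T, zero_mul, map_sub, map_one, hu,
    evalOneAddEps_C_mul_T, sub_eq_zero, eq_comm] at hφ
  have ha : (a : ℤ) = 1 := by simpa using congrArg TrivSqZeroExt.fst hφ
  have hn : n = 0 := by simpa [ha] using congrArg TrivSqZeroExt.snd hφ
  rw [hu, ha, hn, map_one, T_zero, one_mul]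
end
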